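/- For any integer N ≥ 3, real numbers a with 0 < a, h > 0, and real θ, the quantity y = ∑_{k=1}^N cos(2kπ/N - θ) / [1 + a² - 2a·cos(2kπ/N - θ) + h²]^(3/2) is strictly positive. -/

import Mathlib

/-!
Write `c_k = cos (2kπ/N - θ)`, so that the summand is `c_k * w (c_k)` with
`w c = 1 / (1 + a² - 2ac + h²)^(3/2)`, a strictly increasing function of `c ≤ 1` because `a > 0`.
Since the `c_k` are the real parts of the rotated `N`-th roots of unity, `∑ c_k = 0`, hence
`∑ c_k w (c_k) = ∑ c_k (w (c_k) - w 0)`. Each term is nonnegative by monotonicity, and for `N ≥ 3`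
two consecutive `c_k` cannot both vanish, so some term is strictly positive.
-/

open Real Finset

theorem sum_Icc_cos_two_mul_pi_div_sub (N : ℕ) (hN : 1 < N) (θ : ℝ) :
    ∑ k ∈ Icc 1 N, cos (2 * k * π / N - θ) = 0 := by
  set ζ : ℂ := Complex.exp (2 * π * Complex.I / N)
  have hζ : IsPrimitiveRoot ζ N := Complex.isPrimitiveRoot_exp N (by omega)
  have hterm (k : ℕ) : cos (2 * k * π / N - θ) = (Complex.exp (-θ * Complex.I) * ζ ^ k).re := by
    rw [← Complex.exp_nat_mul, ← Complex.exp_add,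
      show (-θ : ℂ) * Complex.I + k * (2 * π * Complex.I / N)
        = ((2 * k * π / N - θ : ℝ) : ℂ) * Complex.I by push_cast; ring,
      Complex.exp_ofReal_mul_I_re]
  have hgeom : ∑ k ∈ Icc 1 N, ζ ^ k = 0 := by
    rw [← Ico_add_one_right_eq_Icc, sum_Ico_eq_sum_range, Nat.add_sub_cancel]
    simp only [pow_add, pow_one, ← mul_sum, hζ.geom_sum_eq_zero hN, mul_zero]
  simp only [hterm, ← Complex.re_sum, ← mul_sum, hgeom, mul_zero, Complex.zero_re]

theorem cos_add_ne_zero_of_cos_eq_zero {x δ : ℝ} (hx : cos x = 0) (hδ₀ : 0 < δ) (hδπ : δ < π) :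
    cos (x + δ) ≠ 0 := by
  have hsin : sin x ≠ 0 := fun h ↦ by simpa [h, hx] using sin_sq_add_cos_sq x
  rw [cos_add, hx, zero_mul, zero_sub, neg_ne_zero]
  exact mul_ne_zero hsin (sin_pos_of_pos_of_lt_pi hδ₀ hδπ).ne'

theorem exists_cos_two_mul_pi_div_sub_ne_zero (N : ℕ) (hN : 3 ≤ N) (θ : ℝ) :
    ∃ k ∈ Icc 1 N, cos (2 * k * π / N - θ) ≠ 0 := by
  by_contra! h
  have hNpos : (0 : ℝ) < N := by positivity
  have hstep : 2 * π / N < π := by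
    rw [div_lt_iff₀ hNpos]
    nlinarith [pi_pos, mul_le_mul_of_nonneg_left (by exact_mod_cast hN : (3 : ℝ) ≤ N) pi_pos.le]
  refine cos_add_ne_zero_of_cos_eq_zero (h 1 (by simp; omega)) (by positivity) hstep ?_
  convert h 2 (by simp; omega) using 2
  push_cast
  ring

theorem mul_sub_pos_of_strictMonoOn {s : Set ℝ} {f : ℝ → ℝ} (hf : StrictMonoOn f s)
    (h₀ : (0 : ℝ) ∈ s) {c : ℝ} (hc : c ∈ s) (hc₀ : c ≠ 0) : 0 < c * (f c - f 0) := by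
  rcases hc₀.lt_or_gt with hneg | hpos
  · exact mul_pos_of_neg_of_neg hneg (sub_neg.mpr (hf hc h₀ hneg))
  · exact mul_pos hpos (sub_pos.mpr (hf h₀ hc hpos))

theorem strictMonoOn_one_div_rpow {a h p : ℝ} (ha : 0 < a) (hh : 0 < h) (hp : 0 < p) :
    StrictMonoOn (fun c ↦ 1 / (1 + a ^ 2 - 2 * a * c + h ^ 2) ^ p) (Set.Iic 1) := by
  intro c₁ hc₁ c₂ hc₂ hlt
  have hpos (c : ℝ) (hc : c ≤ 1) : 0 < 1 + a ^ 2 - 2 * a * c + h ^ 2 := by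
    nlinarith [sq_nonneg (1 - a), mul_nonneg ha.le (sub_nonneg.mpr hc)]
  exact one_div_lt_one_div_of_lt (rpow_pos_of_pos (hpos c₂ hc₂) p)
    (rpow_lt_rpow (hpos c₂ hc₂).le (by nlinarith) hp)

theorem stmt_2 (N : ℕ) (hN : 3 ≤ N) (a h θ : ℝ) (ha : 0 < a) (hh : 0 < h) :
    0 < ∑ k ∈ Finset.Icc 1 N,
      Real.cos (2 * k * π / N - θ) /
        (1 + a ^ 2 - 2 * a * Real.cos (2 * k * π / N - θ) + h ^ 2) ^ ((3 : ℝ) / 2) := by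
  set c : ℕ → ℝ := fun k ↦ cos (2 * k * π / N - θ)
  set w : ℝ → ℝ := fun x ↦ 1 / (1 + a ^ 2 - 2 * a * x + h ^ 2) ^ ((3 : ℝ) / 2)
  have hw : StrictMonoOn w (Set.Iic 1) := strictMonoOn_one_div_rpow ha hh (by norm_num)
  have hc (k : ℕ) : c k ∈ Set.Iic 1 := cos_le_one _
  have hterm (k : ℕ) : 0 ≤ c k * (w (c k) - w 0) := by
    rcases eq_or_ne (c k) 0 with hk | hk
    · rw [hk, zero_mul]
    · exact (mul_sub_pos_of_strictMonoOn hw (by simp) (hc k) hk).le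
  obtain ⟨i, hi, hci⟩ := exists_cos_two_mul_pi_div_sub_ne_zero N hN θ
  calc 0 < ∑ k ∈ Icc 1 N, c k * (w (c k) - w 0) :=
        sum_pos' (fun k _ ↦ hterm k) ⟨i, hi, mul_sub_pos_of_strictMonoOn hw (by simp) (hc i) hci⟩
    _ = ∑ k ∈ Icc 1 N, c k * w (c k) - (∑ k ∈ Icc 1 N, c k) * w 0 := by
        rw [sum_mul, ← sum_sub_distrib]
        simp only [mul_sub]
    _ = ∑ k ∈ Icc 1 N, c k / (1 + a ^ 2 - 2 * a * c k + h ^ 2) ^ ((3 : ℝ) / 2) := by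
        rw [sum_Icc_cos_two_mul_pi_div_sub N (by omega) θ, zero_mul, sub_zero]
        simp only [c, w, mul_one_div]
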